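/- Let a ∈ ℝ and b ∈ (0, 1/(2π)) be such that f_{a,b} has a parabolic cycle on 𝕋 (there exist w ∈ 𝕋 and n ≥ 1 with f_{a,b}^∘n(w) = w and (f_{a,b}^∘n)'(w) = 1), and let r > 1. Then the set {k ∈ ℕ : f_{a,b}^∘k is r-good} is finite, and the set {k ∈ ℕ : there exists an r-good analytic homeomorphism h of 𝕋 with f_{a,b}^∘k(h(w)) = w for all w ∈ 𝕋} is finite. -/

import Mathlib

/-!
Let `F = f^[n]` with parabolic fixed point `z`. The germ of `F` at `z` is not the identity (by
the identity theorem it would be so on all of `ℂ*`, but `f` has a critical point there), so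
`F w = w + (w - z)^m u w` with `m ≥ 2` and `u z ≠ 0`, and then
`F^[q] w = w + (w - z)^m v_q w` with `v_q z = q u z`: the `m`-th coefficient grows linearly.
For `k = n q + s`, an `r`-good `f^[k]`, or an `r`-good `h` with `f^[k] ∘ h = id` on `𝕋`, makes
`f^[k] - f^[s]`, resp. `id - f^[s] ∘ h`, bounded independently of `q` on a fixed disc around the
parabolic point, while its `m`-th coefficient there has modulus `q` times a constant `> 0`.
A Cauchy estimate therefore bounds `q` in each of the `n` residue classes `s`.
-/

open Filter Topology

/-- The complexified Arnold map `f_{a,b}(w) = e^{2πia} w e^{πb(w − 1/w)}` on `ℂ*`. -/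
noncomputable def fab (a b : ℝ) : ℂ → ℂ :=
  fun w => Complex.exp (2 * Real.pi * a * Complex.I) * w *
    Complex.exp (Real.pi * b * (w - w⁻¹))

/-- An analytic homeomorphism of the unit circle `𝕋` is `r`-good (for `r > 1`) if
it extends holomorphically to the annulus `{1/r < |w| < r}`, mapping this annulus
into the annulus `{1/2 < |w| < 2}`, and restricts to a bijection of `𝕋`. -/
def RGoodCircle (r : ℝ) (g : ℂ → ℂ) : Prop :=
  DifferentiableOn ℂ g {w : ℂ | 1 / r < ‖w‖ ∧ ‖w‖ < r} ∧
  Set.MapsTo g {w : ℂ | 1 / r < ‖w‖ ∧ ‖w‖ < r}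
    {w : ℂ | 1 / 2 < ‖w‖ ∧ ‖w‖ < 2} ∧
  Set.BijOn g (Metric.sphere (0 : ℂ) 1) (Metric.sphere (0 : ℂ) 1)

open Metric Set

local notation "𝕋" => sphere (0 : ℂ) 1

-- `RGoodCircle r g` speaks about `annulus r` and `annulus 2`, up to unfolding.
def annulus (R : ℝ) : Set ℂ := {w | 1 / R < ‖w‖ ∧ ‖w‖ < R}

theorem isOpen_annulus (R : ℝ) : IsOpen (annulus R) :=
  (isOpen_lt continuous_const continuous_norm).inter (isOpen_lt continuous_norm continuous_const)

theorem annulus_subset_compl_zero (R : ℝ) : annulus R ⊆ {0}ᶜ := by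
  rintro w ⟨h₁, h₂⟩ rfl
  rw [norm_zero] at h₁ h₂
  exact lt_asymm h₁ (one_div_pos.mpr h₂)

theorem sphere_subset_annulus {R : ℝ} (hR : 1 < R) : 𝕋 ⊆ annulus R := by
  intro w hw
  rw [mem_sphere_zero_iff_norm] at hw
  exact ⟨hw ▸ (div_lt_one (by linarith)).mpr hR, hw ▸ hR⟩

theorem exists_bound_on_annulus {g : ℂ → ℂ} (hg : ContinuousOn g {0}ᶜ) {R : ℝ} (hR : 0 < R) :
    ∃ M, ∀ w ∈ annulus R, ‖g w‖ ≤ M := by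
  have hK : closedBall 0 R \ ball 0 (1 / R) ⊆ {(0 : ℂ)}ᶜ := by
    rintro w ⟨-, hw⟩ rfl
    exact hw (mem_ball_self (by positivity))
  obtain ⟨M, hM⟩ := ((isCompact_closedBall 0 R).diff isOpen_ball).exists_bound_of_continuousOn
    (hg.mono hK)
  refine ⟨M, fun w hw => hM w ⟨?_, ?_⟩⟩
  · rw [mem_closedBall_zero_iff]; exact hw.2.le
  · rw [mem_ball_zero_iff, not_lt]; exact hw.1.le

section Germs

variable {𝕜 : Type*} [NontriviallyNormedField 𝕜]

theorem AnalyticAt.dslope {E : Type*} [NormedAddCommGroup E] [NormedSpace 𝕜 E] {f : 𝕜 → E}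
    {x : 𝕜} (hf : AnalyticAt 𝕜 f x) : AnalyticAt 𝕜 (dslope f x) x :=
  let ⟨_, hP⟩ := hf
  ⟨_, hP.has_fpower_series_dslope_fslope⟩

theorem hasDerivAt_sub_mul {g : 𝕜 → 𝕜} {z : 𝕜} (hg : DifferentiableAt 𝕜 g z) :
    HasDerivAt (fun w => (w - z) * g w) (g z) z := by
  simpa using ((hasDerivAt_id z).sub_const z).fun_mul hg.hasDerivAt

theorem AnalyticAt.exists_eventually_eq_add_pow_mul {F : 𝕜 → 𝕜} {z : 𝕜} (hF : AnalyticAt 𝕜 F z)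
    (hFz : F z = z) (hF' : deriv F z = 1) (hid : ¬ F =ᶠ[𝓝 z] id) :
    ∃ m, 2 ≤ m ∧ ∃ u : 𝕜 → 𝕜, AnalyticAt 𝕜 u z ∧ u z ≠ 0 ∧
      ∀ᶠ w in 𝓝 z, F w = w + (w - z) ^ m * u w := by
  have hfin : analyticOrderAt (fun w => F w - w) z ≠ ⊤ := by
    rw [Ne, analyticOrderAt_eq_top]
    exact fun h => hid (h.mono fun w hw => sub_eq_zero.mp hw)
  obtain ⟨m, hm⟩ := ENat.ne_top_iff_exists.mp hfin
  have hg : AnalyticAt 𝕜 (fun w => F w - w) z := hF.sub analyticAt_id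
  obtain ⟨u, hu, hu0, hFu⟩ := hg.analyticOrderAt_eq_natCast.mp hm.symm
  have hFu' : ∀ᶠ w in 𝓝 z, F w = w + (w - z) ^ m * u w :=
    hFu.mono fun w hw => by simp only [smul_eq_mul] at hw; linear_combination hw
  refine ⟨m, ?_, u, hu, hu0, hFu'⟩
  rcases m with _ | _ | m
  · exact absurd (by simpa [hFz] using hFu'.self_of_nhds) hu0
  · have hd : HasDerivAt F (1 + u z) z :=
      ((hasDerivAt_id z).add (hasDerivAt_sub_mul hu.differentiableAt)).congr_of_eventuallyEq
        (hFu'.mono fun w hw => by simpa using hw)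
    exact absurd (by simpa [hd.deriv] using hF') hu0
  · omega

theorem exists_iterate_eventually_eq_add_pow_mul {F u : 𝕜 → 𝕜} {z : 𝕜} {m : ℕ} (hm : 2 ≤ m)
    (hF : AnalyticAt 𝕜 F z) (hFz : F z = z) (hu : AnalyticAt 𝕜 u z)
    (hFu : ∀ᶠ w in 𝓝 z, F w = w + (w - z) ^ m * u w) (q : ℕ) :
    ∃ v : 𝕜 → 𝕜, AnalyticAt 𝕜 v z ∧ v z = q * u z ∧
      ∀ᶠ w in 𝓝 z, F^[q] w = w + (w - z) ^ m * v w := by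
  obtain ⟨k, rfl⟩ : ∃ k, m = k + 1 := ⟨m - 1, by omega⟩
  induction q with
  | zero => exact ⟨0, analyticAt_const, by simp, by simp⟩
  | succ q ih =>
    obtain ⟨v, hv, hvz, hFv⟩ := ih
    refine ⟨fun w => u w + (1 + (w - z) ^ k * u w) ^ (k + 1) * v (F w), ?_, ?_, ?_⟩
    · exact hu.add (((analyticAt_const.add (((analyticAt_id.sub analyticAt_const).pow k).mul
        hu)).pow _).mul (hv.comp_of_eq hF hFz))
    · simp only [hFz, hvz, sub_self, zero_pow (by omega : k ≠ 0)]
      push_cast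
      ring
    · have hF_tendsto : Tendsto F (𝓝 z) (𝓝 z) := by simpa [hFz] using hF.continuousAt.tendsto
      filter_upwards [hFu, hF_tendsto.eventually hFv] with w h₁ h₂
      have h₃ : F w - z = (w - z) * (1 + (w - z) ^ k * u w) := by rw [h₁]; ring
      rw [Function.iterate_succ_apply, h₂, h₃, mul_pow]
      linear_combination h₁

end Germs

theorem norm_le_of_eventually_eq_pow_mul {G V : ℂ → ℂ} {p : ℂ} {ρ M : ℝ} {m : ℕ} (hm : m ≠ 0)
    (hρ : 0 < ρ) (hG : DifferentiableOn ℂ G (ball p ρ)) (hM : ∀ w ∈ ball p ρ, ‖G w‖ ≤ M)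
    (hV : ContinuousAt V p) (hGV : ∀ᶠ w in 𝓝 p, G w = (w - p) ^ m * V w) :
    ‖V p‖ ≤ M / ρ ^ m := by
  obtain ⟨k, rfl⟩ : ∃ k, m = k + 1 := ⟨m - 1, by omega⟩
  have hGp : G p = 0 := by simpa using hGV.self_of_nhds
  have hlo : (G · - G p) =o[𝓝 p] (fun w => ‖w - p‖ ^ k) := by
    have hsmall : (fun w => (w - p) * V w) =o[𝓝 p] (fun _ => (1 : ℝ)) :=
      (Asymptotics.isLittleO_one_iff ℝ).mpr <| by
        simpa using (show ContinuousAt (fun w => (w - p) * V w) p by fun_prop).tendsto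
    have hpow : (fun w => (w - p) ^ k) =O[𝓝 p] (fun w => ‖w - p‖ ^ k) :=
      Asymptotics.isBigO_of_le _ fun w => by simp
    refine (hpow.mul_isLittleO hsmall).congr' ?_ ?_
    · filter_upwards [hGV] with w hw
      rw [hw, hGp]; ring
    · simp
  have hschwarz : ∀ w ∈ ball p ρ, ‖G w‖ ≤ M * (‖w - p‖ / ρ) ^ (k + 1) := fun w hw => by
    simpa [hGp, dist_eq_norm] using Complex.dist_le_mul_div_pow_of_mapsTo_ball_of_isLittleO hG
      (fun w hw => by simpa [hGp] using hM w hw) hlo hw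
  refine le_of_tendsto (hV.norm.tendsto.mono_left (nhdsWithin_le_nhds (s := {p}ᶜ))) ?_
  filter_upwards [self_mem_nhdsWithin, nhdsWithin_le_nhds (ball_mem_nhds p hρ),
    nhdsWithin_le_nhds hGV] with w hwp hw hGw
  have hpos : 0 < ‖w - p‖ ^ (k + 1) := pow_pos (norm_pos_iff.mpr (sub_ne_zero.mpr hwp)) _
  refine le_of_mul_le_mul_left ?_ hpos
  calc ‖w - p‖ ^ (k + 1) * ‖V w‖ = ‖G w‖ := by rw [hGw, norm_mul, norm_pow]
    _ ≤ M * (‖w - p‖ / ρ) ^ (k + 1) := hschwarz w hw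
    _ = ‖w - p‖ ^ (k + 1) * (M / ρ ^ (k + 1)) := by rw [div_pow]; ring

theorem norm_deriv_pow_mul_le_of_eventually_eq_iterate {F u ψ φ : ℂ → ℂ} {z p : ℂ} {m q : ℕ}
    {ρ M : ℝ} (hm : 2 ≤ m) (hF : AnalyticAt ℂ F z) (hFz : F z = z) (hu : AnalyticAt ℂ u z)
    (hFu : ∀ᶠ w in 𝓝 z, F w = w + (w - z) ^ m * u w)
    (hψ : AnalyticAt ℂ ψ p) (hψp : ψ p = z) (hφ : ∀ᶠ w in 𝓝 p, φ w = F^[q] (ψ w))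
    (hρ : 0 < ρ) (hd : DifferentiableOn ℂ (fun w => φ w - ψ w) (ball p ρ))
    (hM : ∀ w ∈ ball p ρ, ‖φ w - ψ w‖ ≤ M) :
    q * (‖deriv ψ p‖ ^ m * ‖u z‖) ≤ M / ρ ^ m := by
  obtain ⟨v, hv, hvz, hFv⟩ := exists_iterate_eventually_eq_add_pow_mul hm hF hFz hu hFu q
  have hψ_tendsto : Tendsto ψ (𝓝 p) (𝓝 z) := by simpa [hψp] using hψ.continuousAt.tendsto
  have hV : ContinuousAt (fun w => dslope ψ p w ^ m * v (ψ w)) p :=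
    ((hψ.dslope.pow m).mul (hv.comp_of_eq hψ hψp)).continuousAt
  have hfac : ∀ᶠ w in 𝓝 p, φ w - ψ w = (w - p) ^ m * (dslope ψ p w ^ m * v (ψ w)) := by
    filter_upwards [hφ, hψ_tendsto.eventually hFv] with w h₁ h₂
    have h₃ : ψ w - z = (w - p) * dslope ψ p w := by
      rw [← hψp, ← smul_eq_mul, sub_smul_dslope]
    rw [h₁, h₂, h₃, mul_pow]
    ring
  have := norm_le_of_eventually_eq_pow_mul (by omega) hρ hd hM hV hfac
  rwa [dslope_same, hψp, hvz, norm_mul, norm_mul, norm_pow, Complex.norm_natCast,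
    mul_left_comm] at this

section SelfMaps

variable {𝕜 : Type*} [NontriviallyNormedField 𝕜]

theorem Function.Commute.deriv_apply_eq {g F : 𝕜 → 𝕜} {p : 𝕜} (hc : Function.Commute g F)
    (hFp : F p = p) (hg : DifferentiableAt 𝕜 g p) (hF : DifferentiableAt 𝕜 F p)
    (hFg : DifferentiableAt 𝕜 F (g p)) (hg' : deriv g p ≠ 0) : deriv F (g p) = deriv F p := by
  have h₁ : deriv (g ∘ F) p = deriv g p * deriv F p := by
    rw [deriv_comp p (by rwa [hFp]) hF, hFp]
  have h₂ : deriv (F ∘ g) p = deriv F (g p) * deriv g p := deriv_comp p hFg hg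
  rw [hc.comp_eq, h₂, mul_comm] at h₁
  exact mul_left_cancel₀ hg' h₁

theorem deriv_iterate_ne_zero {f : 𝕜 → 𝕜} {S : Set 𝕜} (hS : MapsTo f S S)
    (hf : ∀ w ∈ S, DifferentiableAt 𝕜 f w) (hf' : ∀ w ∈ S, deriv f w ≠ 0) (k : ℕ) {w : 𝕜}
    (hw : w ∈ S) : deriv f^[k] w ≠ 0 := by
  suffices ∃ d ≠ 0, HasDerivAt f^[k] d w by
    obtain ⟨d, hd, hfd⟩ := this
    rwa [hfd.deriv]
  induction k generalizing w with
  | zero => exact ⟨1, one_ne_zero, hasDerivAt_id w⟩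
  | succ k ih =>
    obtain ⟨d, hd, hfd⟩ := ih (hS hw)
    exact ⟨d * deriv f w, mul_ne_zero hd (hf' w hw), hfd.comp w (hf w hw).hasDerivAt⟩

theorem deriv_eq_one_of_comp_eventuallyEq_id {G H : 𝕜 → 𝕜} {p : 𝕜} (hG : HasDerivAt G 1 p)
    (hH : DifferentiableAt 𝕜 H p) (hHp : H p = p) (hGH : G ∘ H =ᶠ[𝓝 p] id) : deriv H p = 1 := by
  have h₁ : HasDerivAt (G ∘ H) (1 * deriv H p) p := (hHp ▸ hG).comp p hH.hasDerivAt
  simpa using h₁.unique ((hasDerivAt_id p).congr_of_eventuallyEq hGH)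

end SelfMaps

theorem iterate_not_eventuallyEq_id {f : ℂ → ℂ} {U : Set ℂ} (hU : IsOpen U)
    (hUc : IsPreconnected U) (hf : DifferentiableOn ℂ f U) (hfU : MapsTo f U U) {c : ℂ}
    (hc : c ∈ U) (hfc : deriv f c = 0) {n : ℕ} (hn : n ≠ 0) {z : ℂ} (hz : z ∈ U) :
    ¬ f^[n] =ᶠ[𝓝 z] id := by
  intro hid
  have hEq : EqOn f^[n] id U :=
    ((hf.iterate hfU n).analyticOnNhd hU).eqOn_of_preconnected_of_eventuallyEq analyticOnNhd_id
      hUc hz hid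
  have h₁ : deriv f^[n] c = 1 := by
    rw [(hEq.eventuallyEq_of_mem (hU.mem_nhds hc)).deriv_eq, deriv_id]
  obtain ⟨k, rfl⟩ : ∃ k, n = k + 1 := ⟨n - 1, by omega⟩
  rw [Function.iterate_succ, deriv_comp c ((hf.iterate hfU k).differentiableAt
    (hU.mem_nhds (hfU hc))) (hf.differentiableAt (hU.mem_nhds hc)), hfc, mul_zero] at h₁
  exact zero_ne_one h₁

theorem frequently_mem_unitSphere {p : ℂ} (hp : p ∈ 𝕋) : ∃ᶠ w in 𝓝[≠] p, w ∈ 𝕋 := by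
  have hT : Preperfect 𝕋 := (isPreconnected_sphere (by simp [Complex.rank_real_complex]) 0 1)
    |>.preperfect_of_nontrivial ⟨1, by simp, -1, by simp, by norm_num⟩
  exact accPt_iff_frequently_nhdsNE.mp (hT p hp)

theorem iterate_apply_eq_of_leftInvOn {α : Type*} {f h : α → α} {S : Set α} {n q s : ℕ} {p : α}
    (hfS : MapsTo f S S) (hh : BijOn h S S) (hinv : LeftInvOn f^[n * q + s] h S) (hp : p ∈ S)
    (hfix : f^[n] p = p) : f^[s] (h p) = p := by
  have hinj : InjOn f^[n * q + s] S :=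
    (BijOn.symm ⟨hh.image_eq ▸ hinv.rightInvOn_image, hinv⟩ hh).injOn
  have hhp : h p ∈ S := hh.mapsTo hp
  have hFhp : f^[n] (h p) = h p := hinj (hfS.iterate n hhp) hhp <| by
    rw [Function.Commute.iterate_iterate_self f _ n (h p), hinv hp, hfix]
  have hFs : f^[n] (f^[s] (h p)) = f^[s] (h p) := by
    rw [← Function.Commute.iterate_iterate_self f s n (h p), hFhp]
  calc f^[s] (h p) = (f^[n])^[q] (f^[s] (h p)) := (Function.iterate_fixed hFs q).symm
    _ = p := by rw [← Function.iterate_mul, ← Function.iterate_add_apply, hinv hp]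

theorem bddAbove_of_forall_mul_le {T : Set ℕ} {ε B : ℝ} (hε : 0 < ε)
    (h : ∀ q ∈ T, q * ε ≤ B) : BddAbove T :=
  ⟨⌈B / ε⌉₊, fun q hq => Nat.cast_le.mp <| ((le_div_iff₀ hε).mpr (h q hq)).trans (Nat.le_ceil _)⟩

theorem finite_of_bddAbove_residues {S : Set ℕ} {n : ℕ} (hn : n ≠ 0)
    (h : ∀ s < n, BddAbove {q | n * q + s ∈ S}) : S.Finite := by
  refine (Set.finite_lt_nat n).biUnion (fun s hs => ((h s hs).finite.image (n * · + s)))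
    |>.subset fun k hk => mem_biUnion (Nat.mod_lt k (Nat.pos_of_ne_zero hn)) ⟨k / n, ?_, ?_⟩
  · simpa [Nat.div_add_mod] using hk
  · exact Nat.div_add_mod k n

theorem DifferentiableOn.analyticAt_iterate {f : ℂ → ℂ} {U : Set ℂ} (hf : DifferentiableOn ℂ f U)
    (hU : IsOpen U) (hfU : MapsTo f U U) (k : ℕ) {z : ℂ} (hz : z ∈ U) : AnalyticAt ℂ f^[k] z :=
  (hf.iterate hfU k).analyticAt (hU.mem_nhds hz)

theorem bddAbove_rGood_iterate {f : ℂ → ℂ} {n : ℕ} {p : ℂ} {r : ℝ}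
    (hf : DifferentiableOn ℂ f {0}ᶜ) (hf0 : MapsTo f {0}ᶜ {0}ᶜ) (hfT : MapsTo f 𝕋 𝕋)
    (hf' : ∀ w ∈ 𝕋, deriv f w ≠ 0) (hnid : ∀ z ∈ 𝕋, ¬ f^[n] =ᶠ[𝓝 z] id)
    (hp : p ∈ 𝕋) (hfix : f^[n] p = p) (hder : deriv f^[n] p = 1) (hr : 1 < r) (s : ℕ) :
    BddAbove {q : ℕ | RGoodCircle r f^[n * q + s]} := by
  have hT0 : ∀ w ∈ 𝕋, w ≠ 0 := fun w hw => ne_zero_of_mem_unit_sphere ⟨w, hw⟩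
  have han : ∀ k, ∀ w ∈ 𝕋, AnalyticAt ℂ f^[k] w := fun k w hw =>
    hf.analyticAt_iterate isOpen_compl_singleton hf0 k (hT0 w hw)
  have hs' : deriv f^[s] p ≠ 0 :=
    deriv_iterate_ne_zero hfT
      (fun w hw => hf.differentiableAt (isOpen_compl_singleton.mem_nhds (hT0 w hw))) hf' s hp
  set y := f^[s] p
  have hyT : y ∈ 𝕋 := hfT.iterate s hp
  have hyfix : f^[n] y = y := by rw [← Function.Commute.iterate_iterate_self f s n p, hfix]
  have hyder : deriv f^[n] y = 1 :=
    ((Function.Commute.iterate_iterate_self f s n).deriv_apply_eq hfix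
      (han s p hp).differentiableAt (han n p hp).differentiableAt
      (han n y hyT).differentiableAt hs').trans hder
  obtain ⟨m, hm, u, hu, hu0, hFu⟩ :=
    (han n y hyT).exists_eventually_eq_add_pow_mul hyfix hyder (hnid y hyT)
  obtain ⟨ρ, hρ, hρr⟩ := nhds_basis_closedBall.mem_iff.mp
    ((isOpen_annulus r).mem_nhds (sphere_subset_annulus hr hp))
  have hρ0 : closedBall p ρ ⊆ {0}ᶜ := hρr.trans (annulus_subset_compl_zero r)
  obtain ⟨M, hM⟩ := (isCompact_closedBall p ρ).exists_bound_of_continuousOn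
    ((hf.iterate hf0 s).continuousOn.mono hρ0)
  refine bddAbove_of_forall_mul_le (B := (2 + M) / ρ ^ m)
    (mul_pos (pow_pos (norm_pos_iff.mpr hs') m) (norm_pos_iff.mpr hu0)) fun q hq => ?_
  refine norm_deriv_pow_mul_le_of_eventually_eq_iterate (φ := f^[n * q + s]) hm (han n y hyT)
    hyfix hu hFu (han s p hp) rfl
    (.of_forall fun w => by rw [Function.iterate_add_apply, Function.iterate_mul]) hρ
    (((hf.iterate hf0 _).sub (hf.iterate hf0 s)).mono (ball_subset_closedBall.trans hρ0))
    fun w hw => (norm_sub_le _ _).trans <| add_le_add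
      (hq.2.1 (hρr (ball_subset_closedBall hw))).2.le (hM w (ball_subset_closedBall hw))

theorem bddAbove_rGood_inverse_iterate {f : ℂ → ℂ} {n : ℕ} {p : ℂ} {r : ℝ}
    (hf : DifferentiableOn ℂ f {0}ᶜ) (hf0 : MapsTo f {0}ᶜ {0}ᶜ) (hfT : MapsTo f 𝕋 𝕋)
    (hnid : ¬ f^[n] =ᶠ[𝓝 p] id) (hp : p ∈ 𝕋) (hfix : f^[n] p = p) (hder : deriv f^[n] p = 1)
    (hr : 1 < r) (s : ℕ) :
    BddAbove {q : ℕ | ∃ h : ℂ → ℂ, RGoodCircle r h ∧ ∀ w ∈ 𝕋, f^[n * q + s] (h w) = w} := by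
  have han : ∀ k, ∀ z ≠ (0 : ℂ), AnalyticAt ℂ f^[k] z := fun k _ hz =>
    hf.analyticAt_iterate isOpen_compl_singleton hf0 k hz
  have hp0 : p ≠ 0 := ne_zero_of_mem_unit_sphere ⟨p, hp⟩
  have hpr : p ∈ annulus r := sphere_subset_annulus hr hp
  obtain ⟨m, hm, u, hu, hu0, hFu⟩ :=
    (han n p hp0).exists_eventually_eq_add_pow_mul hfix hder hnid
  obtain ⟨ρ, hρ, hρr⟩ := nhds_basis_ball.mem_iff.mp ((isOpen_annulus r).mem_nhds hpr)
  obtain ⟨M, hM⟩ := exists_bound_on_annulus (hf.iterate hf0 s).continuousOn two_pos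
  refine bddAbove_of_forall_mul_le (B := (r + M) / ρ ^ m) (norm_pos_iff.mpr hu0)
    fun q ⟨h, ⟨hhd, hhA, hhT⟩, hinv⟩ => ?_
  have hh0 : MapsTo h (annulus r) {0}ᶜ := hhA.mono_right (annulus_subset_compl_zero 2)
  have hhan : ∀ w ∈ annulus r, AnalyticAt ℂ h w := fun w hw =>
    hhd.analyticAt ((isOpen_annulus r).mem_nhds hw)
  set H := fun w => f^[s] (h w)
  have hHp : H p = p := iterate_apply_eq_of_leftInvOn hfT hhT hinv hp hfix
  have hHan : AnalyticAt ℂ H p := (han s _ (hh0 hpr)).comp (hhan p hpr)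
  have hid : ∀ᶠ w in 𝓝 p, w = (f^[n])^[q] (H w) := by
    have hkh := (han (n * q + s) _ (hh0 hpr)).comp (hhan p hpr)
    refine ((analyticAt_id.frequently_eq_iff_eventually_eq hkh).mp
      ((frequently_mem_unitSphere hp).mono fun w hw => (hinv w hw).symm)).mono fun w hw => ?_
    rw [← Function.iterate_mul, ← Function.iterate_add_apply]
    exact hw
  have hF' : HasDerivAt f^[n] 1 p :=
    hder ▸ (han n p hp0).differentiableAt.hasDerivAt
  have hH' : deriv H p = 1 := deriv_eq_one_of_comp_eventuallyEq_id
    (by simpa using HasDerivAt.iterate p hF' hfix q) hHan.differentiableAt hHp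
    (hid.mono fun w hw => hw.symm)
  have hbound := norm_deriv_pow_mul_le_of_eventually_eq_iterate hm
    (han n p hp0) hfix hu hFu hHan hHp hid hρ
    (differentiableOn_id.sub ((hf.iterate hf0 s).comp (hhd.mono hρr) (hh0.mono_left hρr)))
    fun w hw => (norm_sub_le _ _).trans (add_le_add (hρr hw).2.le (hM _ (hhA (hρr hw))))
  rwa [hH', norm_one, one_pow, one_mul] at hbound

theorem mapsTo_fab_compl_zero (a b : ℝ) : MapsTo (fab a b) {0}ᶜ {0}ᶜ := fun _ hw =>
  mul_ne_zero (mul_ne_zero (Complex.exp_ne_zero _) hw) (Complex.exp_ne_zero _)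

theorem hasDerivAt_fab (a b : ℝ) {w : ℂ} (hw : w ≠ 0) :
    HasDerivAt (fab a b) (Complex.exp (2 * Real.pi * a * Complex.I) *
      Complex.exp (Real.pi * b * (w - w⁻¹)) * (1 + Real.pi * b * (w + w⁻¹))) w := by
  have hexp : HasDerivAt (fun w : ℂ => Complex.exp (Real.pi * b * (w - w⁻¹)))
      (Complex.exp (Real.pi * b * (w - w⁻¹)) * (Real.pi * b * (1 + (w ^ 2)⁻¹))) w :=
    (((hasDerivAt_id w).sub (hasDerivAt_inv hw)).const_mul _).cexp.congr_deriv (by simp)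
  refine (((hasDerivAt_id w).const_mul _).mul hexp).congr_deriv ?_
  simp only [id]
  field_simp

theorem differentiableOn_fab (a b : ℝ) : DifferentiableOn ℂ (fab a b) {0}ᶜ := fun _ hw =>
  (hasDerivAt_fab a b hw).differentiableAt.differentiableWithinAt

theorem mapsTo_fab_unitSphere (a b : ℝ) : MapsTo (fab a b) 𝕋 𝕋 := by
  intro w hw
  rw [mem_sphere_zero_iff_norm] at hw ⊢
  have hre : (Real.pi * b * (w - w⁻¹) : ℂ).re = 0 := by
    simp [Complex.inv_eq_conj hw]
  simp [fab, Complex.norm_exp, hw, hre]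

theorem deriv_fab_ne_zero (a : ℝ) {b : ℝ} (hb : b ∈ Ioo (0 : ℝ) (1 / (2 * Real.pi))) {w : ℂ}
    (hw : w ∈ 𝕋) : deriv (fab a b) w ≠ 0 := by
  rw [mem_sphere_zero_iff_norm] at hw
  rw [(hasDerivAt_fab a b (norm_ne_zero_iff.mp (hw ▸ one_ne_zero))).deriv]
  refine mul_ne_zero (mul_ne_zero (Complex.exp_ne_zero _) (Complex.exp_ne_zero _)) fun h => ?_
  have hre : 1 + Real.pi * b * (2 * w.re) = 0 := by
    simpa [Complex.inv_eq_conj hw, two_mul] using congrArg Complex.re h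
  have hπb : Real.pi * b < 1 / 2 := by
    have := (lt_div_iff₀' (by positivity)).mp hb.2
    linarith
  have hw_re : |w.re| ≤ 1 := hw ▸ Complex.abs_re_le_norm w
  nlinarith [abs_le.mp hw_re, mul_pos Real.pi_pos hb.1]

theorem exists_deriv_fab_eq_zero (a : ℝ) {b : ℝ} (hb : b ≠ 0) :
    ∃ c ≠ 0, deriv (fab a b) c = 0 := by
  have hπb : (Real.pi * b : ℂ) ≠ 0 := by exact_mod_cast mul_ne_zero Real.pi_ne_zero hb
  obtain ⟨c, hc⟩ := exists_quadratic_eq_zero hπb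
    (IsAlgClosed.exists_eq_mul_self (discrim (Real.pi * b : ℂ) 1 (Real.pi * b)))
  have hc0 : c ≠ 0 := by
    rintro rfl
    exact hπb (by simpa using hc)
  refine ⟨c, hc0, ?_⟩
  rw [(hasDerivAt_fab a b hc0).deriv]
  refine mul_eq_zero_of_right _ ?_
  field_simp
  linear_combination hc

/-- If `f_{a,b}` has a parabolic cycle on `𝕋` and `r > 1`, then only finitely many
forward iterates `f_{a,b}^∘k` are `r`-good, and only finitely many `k` admit an
`r`-good inverse of `f_{a,b}^∘k` on `𝕋`. -/
theorem finitely_many_good_iterates (a b : ℝ)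
    (hb : b ∈ Set.Ioo (0 : ℝ) (1 / (2 * Real.pi)))
    (hpar : ∃ (w : ℂ) (n : ℕ), w ∈ Metric.sphere (0 : ℂ) 1 ∧ 1 ≤ n ∧
      (fab a b)^[n] w = w ∧ deriv ((fab a b)^[n]) w = 1)
    (r : ℝ) (hr : 1 < r) :
    {k : ℕ | RGoodCircle r ((fab a b)^[k])}.Finite ∧
    {k : ℕ | ∃ h : ℂ → ℂ, RGoodCircle r h ∧
      ∀ w ∈ Metric.sphere (0 : ℂ) 1, (fab a b)^[k] (h w) = w}.Finite := by
  obtain ⟨p, n, hp, hn, hfix, hder⟩ := hpar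
  have hf := differentiableOn_fab a b
  have hf0 := mapsTo_fab_compl_zero a b
  obtain ⟨c, hc, hfc⟩ := exists_deriv_fab_eq_zero a hb.1.ne'
  have hnid : ∀ z ∈ 𝕋, ¬ (fab a b)^[n] =ᶠ[𝓝 z] id := fun z hz =>
    iterate_not_eventuallyEq_id isOpen_compl_singleton
      (isConnected_compl_singleton_of_one_lt_rank (by simp) 0).isPreconnected hf hf0 hc hfc
      (by omega) (ne_zero_of_mem_unit_sphere ⟨z, hz⟩)
  exact ⟨finite_of_bddAbove_residues (by omega) fun s _ =>
      bddAbove_rGood_iterate hf hf0 (mapsTo_fab_unitSphere a b)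
        (fun _ hw => deriv_fab_ne_zero a hb hw) hnid hp hfix hder hr s,
    finite_of_bddAbove_residues (by omega) fun s _ =>
      bddAbove_rGood_inverse_iterate hf hf0 (mapsTo_fab_unitSphere a b) (hnid p hp) hp hfix
        hder hr s⟩
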